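/- Let f : G → Q be a surjective group homomorphism, let N be a subgroup of finite index in Q, let M = f⁻¹(N), and suppose that the induced map f̄ : G^ab → Q^ab on abelianizations is an isomorphism. Then the kernel of the transfer map V_G : G^ab → M^ab is contained in the preimage under f̄ of the kernel of the transfer map V_Q : Q^ab → N^ab; that is, identifying G^ab with Q^ab via f̄, one has ker V_G ⊆ ker V_Q. -/

import Mathlib

open Pointwise Subgroup Subgroup.leftTransversals Subgroup.IsComplement MulAction

section Aux

variable {G : Type*} [Group G] {H : Subgroup G} {A : Type*} [CommGroup A]

lemma diff_range [H.FiniteIndex] (ϕ : H →* A) (t₁ t₂ : G ⧸ H → G)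
    (h₁ : ∀ q, ↑(t₁ q) = q) (h₂ : ∀ q, ↑(t₂ q) = q) :
    Subgroup.leftTransversals.diff ϕ ⟨Set.range t₁, isComplement_range_left h₁⟩
      ⟨Set.range t₂, isComplement_range_left h₂⟩ =
    (@Finset.univ (G ⧸ H) H.fintypeQuotientOfFiniteIndex).prod fun q =>
      ϕ ⟨(t₁ q)⁻¹ * t₂ q, QuotientGroup.eq.mp ((h₁ q).trans (h₂ q).symm)⟩ := by
  unfold Subgroup.leftTransversals.diff
  refine Finset.prod_congr rfl fun q _ => congr_arg ϕ (Subtype.ext ?_)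
  show ((leftQuotientEquiv (isComplement_range_left h₁) q : G))⁻¹ *
      (leftQuotientEquiv (isComplement_range_left h₂) q : G) = (t₁ q)⁻¹ * t₂ q
  rw [leftQuotientEquiv_apply h₁, leftQuotientEquiv_apply h₂]

lemma section_mul_aux [H.FiniteIndex] (t : G ⧸ H → G) (ht : ∀ q, ↑(t q) = q) (g : G)
    (q : G ⧸ H) : ((g * t (g⁻¹ • q) : G) : G ⧸ H) = q := by
  rw [← smul_eq_mul, ← MulAction.Quotient.smul_mk, ht, smul_inv_smul]

lemma transfer_eq_prod_section [H.FiniteIndex] (ϕ : H →* A) (t : G ⧸ H → G)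
    (ht : ∀ q, ↑(t q) = q) (g : G) :
    MonoidHom.transfer ϕ g =
    (@Finset.univ (G ⧸ H) H.fintypeQuotientOfFiniteIndex).prod fun q =>
      ϕ ⟨(t q)⁻¹ * (g * t (g⁻¹ • q)),
        QuotientGroup.eq.mp ((ht q).trans (section_mul_aux t ht g q).symm)⟩ := by
  rw [MonoidHom.transfer_def ϕ ⟨Set.range t, isComplement_range_left ht⟩ g]
  have h' : ∀ q : G ⧸ H, ((fun q => g * t (g⁻¹ • q)) q : G ⧸ H) = q :=
    section_mul_aux t ht g
  have hset : (g • (⟨Set.range t, isComplement_range_left ht⟩ :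
      H.LeftTransversal)) =
      ⟨Set.range fun q => g * t (g⁻¹ • q), isComplement_range_left h'⟩ := by
    apply Subtype.ext
    show g • Set.range t = Set.range fun q => g * t (g⁻¹ • q)
    ext x
    simp only [Set.mem_smul_set, Set.mem_range]
    constructor
    · rintro ⟨_, ⟨q, rfl⟩, rfl⟩
      exact ⟨g • q, by rw [inv_smul_smul]; rfl⟩
    · rintro ⟨q, rfl⟩
      exact ⟨t (g⁻¹ • q), ⟨_, rfl⟩, rfl⟩
  rw [hset, diff_range]
  exacts [ht, h']

lemma transfer_comp_hom {B : Type*} [CommGroup B] [H.FiniteIndex] (ϕ : H →* A) (χ : A →* B)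
    (g : G) : χ (MonoidHom.transfer ϕ g) = MonoidHom.transfer (χ.comp ϕ) g := by
  rw [transfer_eq_prod_section ϕ Quotient.out (fun q => QuotientGroup.out_eq' q) g,
    transfer_eq_prod_section (χ.comp ϕ) Quotient.out (fun q => QuotientGroup.out_eq' q) g,
    map_prod]
  rfl

lemma transfer_comap_eq {Q : Type*} [Group Q] (f : G →* Q) (hf : Function.Surjective f)
    (N : Subgroup Q) [N.FiniteIndex] [(N.comap f).FiniteIndex] (ϕ : N →* A) (g : G) :
    MonoidHom.transfer ϕ (f g) = MonoidHom.transfer (ϕ.comp (f.subgroupComap N)) g := by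
  classical
  letI := (N.comap f).fintypeQuotientOfFiniteIndex
  letI := N.fintypeQuotientOfFiniteIndex
  set e₀ : G ⧸ N.comap f → Q ⧸ N := Quotient.map' f (fun a b h =>
    QuotientGroup.leftRel_apply.mpr (by
      have := QuotientGroup.leftRel_apply.mp h
      simpa [map_mul, map_inv] using this)) with he₀
  have he₀mk : ∀ a : G, e₀ (QuotientGroup.mk a) = QuotientGroup.mk (f a) := fun a => rfl
  have hbij : Function.Bijective e₀ := by
    constructor
    · intro x y
      refine Quotient.inductionOn₂' x y fun a b h => ?_
      apply Quotient.sound'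
      rw [QuotientGroup.leftRel_apply]
      have := QuotientGroup.leftRel_apply.mp (Quotient.exact' h)
      simpa [Subgroup.mem_comap, map_mul, map_inv] using this
    · intro p
      refine Quotient.inductionOn' p fun q => ?_
      obtain ⟨a, rfl⟩ := hf q
      exact ⟨QuotientGroup.mk a, rfl⟩
  set e : (G ⧸ N.comap f) ≃ (Q ⧸ N) := Equiv.ofBijective e₀ hbij with hee
  have heapp : ∀ q, e q = e₀ q := fun q => rfl
  have he : ∀ (a : G) (q : G ⧸ N.comap f), e₀ (a • q) = f a • e₀ q := by
    intro a q
    refine Quotient.inductionOn' q fun x => ?_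
    show QuotientGroup.mk (f (a * x)) = QuotientGroup.mk (f a * f x)
    rw [map_mul]
  set s : Q ⧸ N → Q := fun p => f ((e.symm p).out) with hs'
  have hs : ∀ p, ((s p : Q) : Q ⧸ N) = p := by
    intro p
    show e₀ (QuotientGroup.mk ((e.symm p).out)) = p
    rw [QuotientGroup.out_eq']
    exact e.apply_symm_apply p
  rw [transfer_eq_prod_section ϕ s hs (f g),
    transfer_eq_prod_section (ϕ.comp (f.subgroupComap N)) Quotient.out
      (fun q => QuotientGroup.out_eq' q) g]
  rw [← Equiv.prod_comp e]
  refine Finset.prod_congr rfl fun q _ => ?_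
  have h1 : (f g)⁻¹ • e q = e (g⁻¹ • q) := by
    rw [heapp, heapp, he g⁻¹ q, map_inv]
  have h2 : ∀ r : G ⧸ N.comap f, s (e r) = f r.out := by
    intro r; rw [hs', hee]; simp
  show ϕ _ = ϕ _
  refine congr_arg ϕ (Subtype.ext ?_)
  show (s (e q))⁻¹ * (f g * s ((f g)⁻¹ • e q)) = f (q.out⁻¹ * (g * (g⁻¹ • q).out))
  rw [h1, h2, h2, map_mul, map_mul, map_inv]

end Aux

/-- The transfer map `G^ab → H^ab` for a finite-index subgroup `H` of `G`. -/
noncomputable def transferAb {G : Type*} [Group G] (H : Subgroup G) [H.FiniteIndex] :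
    Abelianization G →* Abelianization H :=
  Abelianization.lift (MonoidHom.transfer (Abelianization.of (G := H)))

theorem transfer_kernel_of_abelianization_iso
    {G Q : Type*} [Group G] [Group Q] (f : G →* Q) (hf : Function.Surjective f)
    (N : Subgroup Q) [N.FiniteIndex]
    (hab : Function.Bijective (Abelianization.map f)) :
    letI : (N.comap f).FiniteIndex :=
      ⟨by rw [N.index_comap_of_surjective hf]
          exact Subgroup.FiniteIndex.index_ne_zero⟩
    (transferAb (N.comap f)).ker ≤ (transferAb N).ker.comap (Abelianization.map f) := by
  letI : (N.comap f).FiniteIndex :=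
    ⟨by rw [N.index_comap_of_surjective hf]
        exact Subgroup.FiniteIndex.index_ne_zero⟩
  intro x hx
  obtain ⟨g, rfl⟩ : ∃ g, Abelianization.of g = x := QuotientGroup.mk'_surjective (commutator G) x
  have hx1 : MonoidHom.transfer (Abelianization.of (G := ↥(N.comap f)))  g = 1 := by
    have := hx
    rwa [MonoidHom.mem_ker] at this
  simp only [Subgroup.mem_comap, MonoidHom.mem_ker]
  have h0 : (QuotientGroup.mk' (commutator G)) g = Abelianization.of g := rfl
  rw [Abelianization.map_of, transferAb, Abelianization.lift_apply_of,
    transfer_comap_eq f hf N _ g]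
  have hcomp : (Abelianization.of (G := N)).comp (f.subgroupComap N) =
      (Abelianization.map (f.subgroupComap N)).comp (Abelianization.of) := by
    ext y
    simp [Abelianization.map_of]
  rw [hcomp, ← transfer_comp_hom (Abelianization.of) (Abelianization.map (f.subgroupComap N)) g]
  have : MonoidHom.transfer (Abelianization.of (G := ↥(N.comap f))) g = 1 := hx1
  rw [this, map_one]
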